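/- Let I = (𝔼, D, c, f) be a CMP instance whose objective f is of type sum or of type bottleneck, and let E = {e_1,…,e_k} ⊆ 𝔼. Then u_b'(I,E) = min_{l=1,…,k} u'(I,e_l). -/

import Mathlib

open scoped ENNReal BigOperators

/-- Objective type of a combinatorial minimization problem:
sum, product, or bottleneck. -/
inductive ObjType where
  | sum : ObjType
  | prod : ObjType
  | bottleneck : ObjType
deriving DecidableEq

/-- The cost `f_c(S)` of a feasible solution `S` under cost function `c`:
the sum, the product, or the maximum (for nonempty `S`) of the element costs. -/
noncomputable def objCost {ι : Type*} (t : ObjType) (c : ι → ℝ) (S : Finset ι) : ℝ :=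
  match t with
  | ObjType.sum => ∑ e ∈ S, c e
  | ObjType.prod => ∏ e ∈ S, c e
  | ObjType.bottleneck => if h : S.Nonempty then S.sup' h c else 0

/-- The optimal objective value `f(I)` of the instance with feasible set `D`. -/
noncomputable def optVal {ι : Type*} (t : ObjType) (c : ι → ℝ) (D : Finset (Finset ι)) : ℝ :=
  if h : D.Nonempty then D.inf' h (objCost t c) else 0

/-- `S` is an optimal solution of the instance `(𝔼, D, c, f)`. -/
def isOpt {ι : Type*} (t : ObjType) (c : ι → ℝ) (D : Finset (Finset ι)) (S : Finset ι) : Prop :=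
  S ∈ D ∧ objCost t c S = optVal t c D

/-- `0 ≤ a < maxdec(e)`, where `maxdec(e) = ∞` for sum/bottleneck objectives and
`maxdec(e) = c(e)` for the product objective. -/
def decOK {ι : Type*} (t : ObjType) (c : ι → ℝ) (e : ι) (a : ℝ) : Prop :=
  0 ≤ a ∧ (t = ObjType.prod → a < c e)

/-- Extended single upper tolerance
`u'(I,e) = sup {α ≥ 0 : every optimal solution of I is optimal for I_{α,e}}` valued in `[0,∞]`. -/
noncomputable def uTol {ι : Type*} [DecidableEq ι] (t : ObjType) (c : ι → ℝ)
    (D : Finset (Finset ι)) (e : ι) : ℝ≥0∞ :=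
  sSup (ENNReal.ofReal '' {a : ℝ | 0 ≤ a ∧
    ∀ S : Finset ι, isOpt t c D S →
      isOpt t (fun x => if x = e then c x + a else c x) D S})

/-- Extended regular set upper tolerance `u'(I,E)`, valued in `[0,∞]`. -/
noncomputable def uTolSet {ι : Type*} [DecidableEq ι] (t : ObjType) (c : ι → ℝ)
    (D : Finset (Finset ι)) (E : Finset ι) : ℝ≥0∞ :=
  sSup (ENNReal.ofReal '' {a : ℝ |
    ∀ S : Finset ι, isOpt t c D S →
      ∃ α : ι → ℝ, (∀ x, 0 ≤ α x) ∧ (∀ x ∉ E, α x = 0) ∧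
        a = ∑ x ∈ E, α x ∧ isOpt t (fun x => c x + α x) D S})

/-- Extended reverse set upper tolerance `u_b'(I,E)`, valued in `[0,∞]` (`inf ∅ = ∞`). -/
noncomputable def uTolSetRev {ι : Type*} [DecidableEq ι] (t : ObjType) (c : ι → ℝ)
    (D : Finset (Finset ι)) (E : Finset ι) : ℝ≥0∞ :=
  sInf (ENNReal.ofReal '' {a : ℝ |
    ∃ S : Finset ι, isOpt t c D S ∧
      ∃ α : ι → ℝ, (∀ x, 0 ≤ α x) ∧ (∀ x ∉ E, α x = 0) ∧
        a = ∑ x ∈ E, α x ∧ ¬ isOpt t (fun x => c x + α x) D S})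

/-- New single lower tolerance
`l'(I,e) = sup {α : 0 ≤ α < maxdec(e), f(I_{−α,e}) = f(I)}`, valued in `[0,∞]`. -/
noncomputable def lTol {ι : Type*} [DecidableEq ι] (t : ObjType) (c : ι → ℝ)
    (D : Finset (Finset ι)) (e : ι) : ℝ≥0∞ :=
  sSup (ENNReal.ofReal '' {a : ℝ | decOK t c e a ∧
    optVal t (fun x => if x = e then c x - a else c x) D = optVal t c D})

/-- New regular set lower tolerance `l'(I,E)`, valued in `[0,∞]`. -/
noncomputable def lTolSet {ι : Type*} [DecidableEq ι] (t : ObjType) (c : ι → ℝ)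
    (D : Finset (Finset ι)) (E : Finset ι) : ℝ≥0∞ :=
  sSup (ENNReal.ofReal '' {a : ℝ |
    ∃ α : ι → ℝ, (∀ x ∈ E, decOK t c x (α x)) ∧ (∀ x ∉ E, α x = 0) ∧
      a = ∑ x ∈ E, α x ∧ optVal t (fun x => c x - α x) D = optVal t c D})

/-- New reverse set lower tolerance `l_b'(I,E)`, valued in `[0,∞]` (`inf ∅ = ∞`). -/
noncomputable def lTolSetRev {ι : Type*} [DecidableEq ι] (t : ObjType) (c : ι → ℝ)
    (D : Finset (Finset ι)) (E : Finset ι) : ℝ≥0∞ :=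
  sInf (ENNReal.ofReal '' {a : ℝ |
    ∃ α : ι → ℝ, (∀ x ∈ E, decOK t c x (α x)) ∧ (∀ x ∉ E, α x = 0) ∧
      a = ∑ x ∈ E, α x ∧ optVal t (fun x => c x - α x) D < optVal t c D})


/-! If an optimal `S` stops being optimal after the costs on `E` are raised by `α ≥ 0`, some
feasible `T` now beats it. For sum and bottleneck objectives there is then a single element
`e ∈ E ∩ S \ T` (for the bottleneck, the maximiser of `c + α` on `S`) such that raising `c e`
alone by `∑ α` hurts `S` at least as much as `α` did, while the cost of `T` does not move; so
`min_e u'(I,e) ≤ u_b'(I,E)`. Conversely, raising a single `c e` is one of the perturbations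
allowed in `u_b'(I,E)`. -/

section Tolerance

variable {ι : Type*} {t : ObjType} {c α : ι → ℝ} {D : Finset (Finset ι)} {S T : Finset ι}

theorem optVal_le_objCost (hS : S ∈ D) : optVal t c D ≤ objCost t c S := by
  rw [optVal, dif_pos ⟨S, hS⟩]
  exact Finset.inf'_le _ hS

theorem isOpt_iff : isOpt t c D S ↔ S ∈ D ∧ ∀ T ∈ D, objCost t c S ≤ objCost t c T := by
  refine ⟨fun ⟨hS, hSval⟩ => ⟨hS, fun T hT => hSval ▸ optVal_le_objCost hT⟩,
    fun ⟨hS, hmin⟩ => ⟨hS, le_antisymm ?_ (optVal_le_objCost hS)⟩⟩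
  rw [optVal, dif_pos ⟨S, hS⟩]
  exact Finset.le_inf' _ _ hmin

theorem objCost_congr {c' : ι → ℝ} (h : ∀ x ∈ S, c x = c' x) :
    objCost t c S = objCost t c' S := by
  cases t with
  | sum => exact Finset.sum_congr rfl h
  | prod => exact Finset.prod_congr rfl h
  | bottleneck =>
    by_cases hS : S.Nonempty
    · simp only [objCost, dif_pos hS]
      exact Finset.sup'_congr hS rfl h
    · simp only [objCost, dif_neg hS]

theorem objCost_mono (ht : t = .sum ∨ t = .bottleneck) {c' : ι → ℝ}
    (h : ∀ x ∈ S, c x ≤ c' x) : objCost t c S ≤ objCost t c' S := by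
  rcases ht with rfl | rfl
  · exact Finset.sum_le_sum h
  · by_cases hS : S.Nonempty
    · simp only [objCost, dif_pos hS]
      exact Finset.sup'_mono_fun h
    · simp only [objCost, dif_neg hS, le_refl]

variable [DecidableEq ι]

theorem exists_dominating_mem_sdiff_sum (hα : ∀ x, 0 ≤ α x)
    (hST : objCost .sum c S ≤ objCost .sum c T)
    (hlt : objCost .sum (fun x => c x + α x) T < objCost .sum (fun x => c x + α x) S) :
    ∃ e ∈ S, e ∉ T ∧ 0 < α e ∧ ∀ b, ∑ x ∈ S, α x ≤ b →
      objCost .sum (fun x => c x + α x) S ≤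
        objCost .sum (fun x => if x = e then c x + b else c x) S := by
  simp only [objCost, Finset.sum_add_distrib] at hST hlt ⊢
  have hαT : ∑ x ∈ S ∩ T, α x ≤ ∑ x ∈ T, α x :=
    Finset.sum_le_sum_of_subset_of_nonneg Finset.inter_subset_right fun x _ _ => hα x
  have hαST : ∑ _x ∈ S \ T, (0 : ℝ) < ∑ x ∈ S \ T, α x := by
    rw [Finset.sum_const_zero]
    linarith [Finset.sum_inter_add_sum_sdiff S T α]
  obtain ⟨e, heST, hαe⟩ := Finset.exists_lt_of_sum_lt hαST
  obtain ⟨heS, heT⟩ := Finset.mem_sdiff.1 heST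
  refine ⟨e, heS, heT, hαe, fun b hb => ?_⟩
  have hraise : ∀ x, (if x = e then c x + b else c x) = c x + if x = e then b else 0 := by
    intro x; split_ifs <;> simp
  simp only [hraise, Finset.sum_add_distrib, Finset.sum_ite_eq', if_pos heS]
  linarith

theorem exists_dominating_mem_sdiff_bottleneck (hS : S.Nonempty) (hT : T.Nonempty)
    (hα : ∀ x, 0 ≤ α x) (hST : objCost .bottleneck c S ≤ objCost .bottleneck c T)
    (hlt : objCost .bottleneck (fun x => c x + α x) T <
      objCost .bottleneck (fun x => c x + α x) S) :
    ∃ e ∈ S, e ∉ T ∧ 0 < α e ∧ ∀ b, ∑ x ∈ S, α x ≤ b →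
      objCost .bottleneck (fun x => c x + α x) S ≤
        objCost .bottleneck (fun x => if x = e then c x + b else c x) S := by
  simp only [objCost, dif_pos hS, dif_pos hT] at hST hlt ⊢
  obtain ⟨e, heS, hemax⟩ := Finset.exists_mem_eq_sup' hS fun x => c x + α x
  rw [hemax] at hlt ⊢
  have hcT : T.sup' hT c ≤ T.sup' hT fun x => c x + α x :=
    Finset.sup'_mono_fun fun x _ => le_add_of_nonneg_right (hα x)
  have heT : e ∉ T := fun he => (Finset.le_sup' (fun x => c x + α x) he).not_gt hlt
  have hαe : 0 < α e := by linarith [Finset.le_sup' c heS]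
  refine ⟨e, heS, heT, hαe, fun b hb => ?_⟩
  have hαb : α e ≤ b := (Finset.single_le_sum (fun x _ => hα x) heS).trans hb
  calc c e + α e ≤ c e + b := by linarith
    _ = (fun x => if x = e then c x + b else c x) e := by simp
    _ ≤ _ := Finset.le_sup' (fun x => if x = e then c x + b else c x) heS

theorem exists_dominating_mem_sdiff (ht : t = .sum ∨ t = .bottleneck) (hS : S.Nonempty)
    (hT : T.Nonempty) (hα : ∀ x, 0 ≤ α x) (hST : objCost t c S ≤ objCost t c T)
    (hlt : objCost t (fun x => c x + α x) T < objCost t (fun x => c x + α x) S) :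
    ∃ e ∈ S, e ∉ T ∧ 0 < α e ∧ ∀ b, ∑ x ∈ S, α x ≤ b →
      objCost t (fun x => c x + α x) S ≤
        objCost t (fun x => if x = e then c x + b else c x) S := by
  rcases ht with rfl | rfl
  · exact exists_dominating_mem_sdiff_sum hα hST hlt
  · exact exists_dominating_mem_sdiff_bottleneck hS hT hα hST hlt

theorem exists_mem_forall_not_isOpt_raise (ht : t = .sum ∨ t = .bottleneck)
    (hSne : ∀ S ∈ D, S.Nonempty) {E : Finset ι} (hS : isOpt t c D S) (hα : ∀ x, 0 ≤ α x)
    (hαE : ∀ x ∉ E, α x = 0) (hnot : ¬ isOpt t (fun x => c x + α x) D S) :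
    ∃ e ∈ E, ∀ b, ∑ x ∈ E, α x ≤ b →
      ¬ isOpt t (fun x => if x = e then c x + b else c x) D S := by
  obtain ⟨hSD, hSmin⟩ := isOpt_iff.1 hS
  obtain ⟨T, hTD, hlt⟩ :
      ∃ T ∈ D, objCost t (fun x => c x + α x) T < objCost t (fun x => c x + α x) S := by
    simpa [isOpt_iff, hSD] using hnot
  obtain ⟨e, heS, heT, hαe, hdom⟩ :=
    exists_dominating_mem_sdiff ht (hSne S hSD) (hSne T hTD) hα (hSmin T hTD) hlt
  have heE : e ∈ E := by_contra fun he => (hαE e he ▸ hαe).false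
  have hαSE : ∑ x ∈ S, α x ≤ ∑ x ∈ E, α x :=
    calc ∑ x ∈ S, α x = ∑ x ∈ S ∩ E, α x :=
          (Finset.sum_subset Finset.inter_subset_left fun x hxS hx =>
            hαE x fun hxE => hx (Finset.mem_inter.2 ⟨hxS, hxE⟩)).symm
      _ ≤ ∑ x ∈ E, α x :=
          Finset.sum_le_sum_of_subset_of_nonneg Finset.inter_subset_right fun x _ _ => hα x
  refine ⟨e, heE, fun b hb hopt => ?_⟩
  have hST : objCost t (fun x => if x = e then c x + b else c x) S ≤
      objCost t (fun x => if x = e then c x + b else c x) T := (isOpt_iff.1 hopt).2 T hTD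
  have hT : objCost t (fun x => if x = e then c x + b else c x) T = objCost t c T :=
    objCost_congr fun x hx => if_neg (ne_of_mem_of_not_mem hx heT)
  have hcT : objCost t c T ≤ objCost t (fun x => c x + α x) T :=
    objCost_mono ht fun x _ => le_add_of_nonneg_right (hα x)
  linarith [hdom b (hαSE.trans hb)]

theorem uTolSetRev_le_uTol {E : Finset ι} {e : ι} (he : e ∈ E) :
    uTolSetRev t c D E ≤ uTol t c D e := by
  refine le_of_forall_gt_imp_ge_of_dense fun z hz => ?_
  rcases eq_or_ne z ⊤ with rfl | hztop
  · exact le_top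
  have hgood : ¬ (0 ≤ z.toReal ∧ ∀ S, isOpt t c D S →
      isOpt t (fun x => if x = e then c x + z.toReal else c x) D S) := fun h =>
    (le_sSup ⟨z.toReal, h, ENNReal.ofReal_toReal hztop⟩ : z ≤ uTol t c D e).not_gt hz
  push Not at hgood
  obtain ⟨S, hS, hnot⟩ := hgood ENNReal.toReal_nonneg
  refine sInf_le ⟨z.toReal, ⟨S, hS, fun x => if x = e then z.toReal else 0, ?_, ?_, ?_, ?_⟩,
    ENNReal.ofReal_toReal hztop⟩
  · intro x
    dsimp only
    split_ifs <;> simp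
  · intro x hx
    exact if_neg (ne_of_mem_of_not_mem he hx).symm
  · rw [Finset.sum_ite_eq', if_pos he]
  · have hraise : (fun x => c x + if x = e then z.toReal else 0) =
        fun x => if x = e then c x + z.toReal else c x := by
      funext x
      split_ifs <;> simp
    simpa only [hraise] using hnot

theorem uTol_le_ofReal {S : Finset ι} {e : ι} {a : ℝ} (hS : isOpt t c D S)
    (h : ∀ b, a ≤ b → ¬ isOpt t (fun x => if x = e then c x + b else c x) D S) :
    uTol t c D e ≤ ENNReal.ofReal a :=
  sSup_le fun _ ⟨b, ⟨_, hb⟩, hbw⟩ =>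
    hbw ▸ ENNReal.ofReal_le_ofReal (not_le.1 fun hab => h b hab (hb S hS)).le

end Tolerance

theorem urv_eq_min_general {ι : Type*} [DecidableEq ι]
    (t : ObjType) (c : ι → ℝ) (D : Finset (Finset ι))
    (hSne : ∀ S ∈ D, S.Nonempty)
    (ht : t = ObjType.sum ∨ t = ObjType.bottleneck)
    (E : Finset ι) :
    uTolSetRev t c D E = E.inf fun e => uTol t c D e := by
  refine le_antisymm (Finset.le_inf fun e he => uTolSetRev_le_uTol he) (le_sInf ?_)
  rintro _ ⟨a, ⟨S, hS, α, hα, hαE, rfl, hnot⟩, rfl⟩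
  obtain ⟨e, he, hraise⟩ := exists_mem_forall_not_isOpt_raise ht hSne hS hα hαE hnot
  exact (Finset.inf_le he).trans (uTol_le_ofReal hS hraise)

/-- Theorem (reverse set upper tolerance, sum/bottleneck case):
`u_b'(I,E) = min_{l} u'(I,e_l)`. -/
theorem urv_eq_min {ι : Type*} [Fintype ι] [DecidableEq ι]
    (t : ObjType) (c : ι → ℝ) (D : Finset (Finset ι))
    (hD : D.Nonempty) (hSne : ∀ S ∈ D, S.Nonempty)
    (ht : t = ObjType.sum ∨ t = ObjType.bottleneck)
    (E : Finset ι) (hE : E.Nonempty) :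
    uTolSetRev t c D E = E.inf fun e => uTol t c D e :=
  urv_eq_min_general t c D hSne ht E
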